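/- Suppose every two-element subsequence q ∘ q' of R_{A,B} is a maximal increasing subsequence of R_{A,B}[f(q):f(q')] exactly when ⌈i_q⌉ ≤ i_{q'}, ⌈j_q⌉ ≤ j_{q'}, and (i_{q'} − i_q) + (j_{q'} − j_q) = 1. Then a subsequence Q of R_{A,B} is an [r(i⊢,j⊢):r(i⊣,j⊣)]-banded maximal increasing subsequence of R_{A,B}[f(i⊢,j⊢):f(i⊣,j⊣)] if and only if Q = P̂ for some alignment P of A[i⊢:i⊣] and B[j⊢:j⊣]. -/

import Mathlib

/-- One step of a warping path: advance by (1,1), (1,0), or (0,1). -/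
def IsStep (p q : ℕ × ℕ) : Prop :=
  q = (p.1 + 1, p.2 + 1) ∨ q = (p.1 + 1, p.2) ∨ q = (p.1, p.2 + 1)

/-- `P` is an alignment of `A[il:ir]` and `B[jl:jr]`: a nonempty staircase path of
index pairs from `(il, jl)` to `(ir, jr)`. -/
def IsAlignment (il ir jl jr : ℕ) (P : List (ℕ × ℕ)) : Prop :=
  P.head? = some (il, jl) ∧ P.getLast? = some (ir, jr) ∧ P.Chain' IsStep

/-- The discrepancy of an alignment w.r.t. dissimilarity `d`. -/
def disc (d : ℕ → ℕ → ℕ) (P : List (ℕ × ℕ)) : ℕ :=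
  (P.map fun p => d p.1 p.2).sum

/-- The DTW distance: minimum discrepancy over all alignments. -/
noncomputable def dtw (d : ℕ → ℕ → ℕ) (il ir jl jr : ℕ) : ℕ :=
  sInf {x | ∃ P, IsAlignment il ir jl jr P ∧ disc d P = x}

/-- The number of diagonal steps of an alignment. -/
def diagCount (P : List (ℕ × ℕ)) : ℕ :=
  ((P.zip P.tail).filter fun pq => decide (pq.2 = (pq.1.1 + 1, pq.1.2 + 1))).length


/-- Formal tokens: `r i j` (weight `c - d i j`) and `rt i j` (the token `r̃(i,j)`, weight `c`). -/
inductive Tok where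
  | r  (i j : ℕ) : Tok
  | rt (i j : ℕ) : Tok
deriving DecidableEq

/-- The domain of tokens: `r(i,j)` for `1 ≤ i ≤ m`, `1 ≤ j ≤ n`,
and `r̃(i,j)` for `2 ≤ i ≤ m`, `2 ≤ j ≤ n`. -/
def TokDom (m n : ℕ) : Tok → Prop
  | .r i j  => 1 ≤ i ∧ i ≤ m ∧ 1 ≤ j ∧ j ≤ n
  | .rt i j => 2 ≤ i ∧ i ≤ m ∧ 2 ≤ j ∧ j ≤ n

/-- The position `f(q)` of a token in the sequence `R_{A,B}`. -/
def tpos (n : ℕ) : Tok → ℕ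
  | .r i j  => (i - 1) * (2 * n - 1) + j
  | .rt i j => (i - 1) * (2 * n - 1) - j + 2

/-- The integer value of a token in the sequence `R_{A,B}`. -/
def tval (m : ℕ) : Tok → ℕ
  | .r i j  => (j - 1) * (2 * m - 1) + i
  | .rt i j => (j - 1) * (2 * m - 1) - i + 2

/-- The (half-integer) row coordinate `i_q` of a token. -/
def iq : Tok → ℚ
  | .r i _  => i
  | .rt i _ => (i : ℚ) - 1/2

/-- The (half-integer) column coordinate `j_q` of a token. -/
def jq : Tok → ℚ
  | .r _ j  => j
  | .rt _ j => (j : ℚ) - 1/2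

/-- The weight of a token: `c - d i j` for `r(i,j)` and `c` for `r̃(i,j)`. -/
def tw (c : ℕ) (d : ℕ → ℕ → ℕ) : Tok → ℕ
  | .r i j => c - d i j
  | .rt _ _ => c

/-- `Q` is an increasing subsequence of the segment of `R_{A,B}` occupying
positions `pl` through `pr`: its tokens are in the domain, their positions lie in
`[pl, pr]` and strictly increase, and their values strictly increase. -/
def IncSeg (m n pl pr : ℕ) (Q : List Tok) : Prop :=
  (∀ t ∈ Q, TokDom m n t ∧ pl ≤ tpos n t ∧ tpos n t ≤ pr) ∧
    Q.Chain' fun t t' => tpos n t < tpos n t' ∧ tval m t < tval m t'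

/-- `Q` is `[a:b]`-banded: every value lies in `[a, b]`. -/
def Banded (m a b : ℕ) (Q : List Tok) : Prop :=
  ∀ t ∈ Q, a ≤ tval m t ∧ tval m t ≤ b

/-- `Q` is a maximal increasing subsequence of the segment `[pl, pr]` of `R_{A,B}`:
it is the only increasing subsequence of the segment having it as a subsequence. -/
def MaxIncSeg (m n pl pr : ℕ) (Q : List Tok) : Prop :=
  IncSeg m n pl pr Q ∧ ∀ Q', IncSeg m n pl pr Q' → Q.Sublist Q' → Q' = Q

/-- `Q` is a maximal `[a:b]`-banded increasing subsequence of the segment `[pl, pr]`. -/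
def MaxBandIncSeg (m n pl pr a b : ℕ) (Q : List Tok) : Prop :=
  IncSeg m n pl pr Q ∧ Banded m a b Q ∧
    ∀ Q', IncSeg m n pl pr Q' → Banded m a b Q' → Q.Sublist Q' → Q' = Q


/-- Helper for `hat`: processes the tail of an alignment, knowing the previous pair. -/
def hatAux : ℕ × ℕ → List (ℕ × ℕ) → List Tok
  | _, [] => []
  | p, q :: rest =>
      (if q = (p.1 + 1, p.2 + 1) then [Tok.rt q.1 q.2, Tok.r q.1 q.2]
       else [Tok.r q.1 q.2]) ++ hatAux q rest

/-- `hat P` is the sequence `P̂`: each diagonal step `(i,j)` of the alignment `P` is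
replaced by `r̃(i,j) ∘ r(i,j)`, and every other element `(i,j)` by `r(i,j)`. -/
def hat : List (ℕ × ℕ) → List Tok
  | [] => []
  | p :: rest => Tok.r p.1 p.2 :: hatAux p rest


/-!
Order the tokens by `t < t'` iff `t` comes before `t'` in `R_{A,B}` and has a smaller value.
On the domain both the position and the value determine the token, so the window cut out by
the positions and the band of `r(i⊢,j⊢)` and `r(i⊣,j⊣)` is exactly the closed interval between
these two tokens, and the banded maximal increasing subsequences are the maximal chains of that
interval. The maximal chains of a closed interval are the chains of covering steps from its
bottom to its top. A pair `q ∘ q'` is maximal in `R_{A,B}[f(q):f(q')]` iff `q'` covers `q`, so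
the hypothesis identifies the covering steps with the unit steps in half-integer coordinates:
`r(i,j)` to `r(i+1,j)`, `r(i,j+1)` or `r̃(i+1,j+1)`, and `r̃(i,j)` to `r(i,j)`. The step chains
from `r(i⊢,j⊢)` to `r(i⊣,j⊣)` are exactly the sequences `P̂`.
-/

section MaximalChains

variable {α : Type*} {r : α → α → Prop}

theorem List.Sublist.exists_eq_append_cons_of_ne {l l' : List α} (h : l.Sublist l') (hne : l' ≠ l) :
    ∃ l₁ x l₂, l' = l₁ ++ x :: l₂ ∧ l.Sublist (l₁ ++ l₂) := by
  induction h with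
  | slnil => exact absurd rfl hne
  | cons x h _ => exact ⟨[], x, _, rfl, h⟩
  | cons_cons x h ih =>
    obtain ⟨l₁, y, l₂, rfl, hsub⟩ := ih fun heq => hne (heq ▸ rfl)
    exact ⟨x :: l₁, y, l₂, rfl, hsub.cons_cons x⟩

def IsChainIn (r : α → α → Prop) (S : α → Prop) (l : List α) : Prop :=
  (∀ x ∈ l, S x) ∧ l.IsChain r

def IsMaxChainIn (r : α → α → Prop) (S : α → Prop) (l : List α) : Prop :=
  IsChainIn r S l ∧ ∀ l', IsChainIn r S l' → l.Sublist l' → l' = l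

def CovByIn (r : α → α → Prop) (D : α → Prop) (a b : α) : Prop :=
  r a b ∧ ∀ x, D x → r a x → ¬ r x b

theorem isChain_append_cons_of_rel {l₁ l₂ : List α} {x : α} (h : (l₁ ++ l₂).IsChain r)
    (h₁ : ∀ y ∈ l₁.getLast?, r y x) (h₂ : ∀ y ∈ l₂.head?, r x y) :
    (l₁ ++ x :: l₂).IsChain r := by
  obtain ⟨hl₁, hl₂, -⟩ := List.isChain_append.mp h
  exact List.isChain_append.mpr
    ⟨hl₁, List.isChain_cons.mpr ⟨h₂, hl₂⟩, fun y hy z hz => by simp_all⟩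

variable [IsTrans α r]

theorem isMaxChainIn_iff {S : α → Prop} {l : List α} :
    IsMaxChainIn r S l ↔ IsChainIn r S l ∧ ∀ x, S x → ∀ l₁ l₂, l = l₁ ++ l₂ →
      (∀ y ∈ l₁.getLast?, r y x) → ¬ ∀ y ∈ l₂.head?, r x y := by
  refine ⟨fun ⟨hl, hmax⟩ => ⟨hl, fun x hx l₁ l₂ hsplit h₁ h₂ => ?_⟩,
    fun ⟨hl, hsat⟩ => ⟨hl, fun l' ⟨hS', hl'⟩ hsub => ?_⟩⟩
  · subst hsplit
    have hext : IsChainIn r S (l₁ ++ x :: l₂) :=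
      ⟨fun y hy => by
        simp only [List.mem_append, List.mem_cons] at hy
        rcases hy with hy | rfl | hy
        exacts [hl.1 y (List.mem_append_left _ hy), hx, hl.1 y (List.mem_append_right _ hy)],
        isChain_append_cons_of_rel hl.2 h₁ h₂⟩
    simpa using congrArg List.length (hmax _ hext (by simp))
  · by_contra hne
    obtain ⟨m₁, x, m₂, rfl, hsub'⟩ := hsub.exists_eq_append_cons_of_ne hne
    obtain ⟨l₁, l₂, rfl, hl₁, hl₂⟩ := List.sublist_append_iff.mp hsub'
    have hpw := List.pairwise_append.mp (List.isChain_iff_pairwise.mp hl')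
    refine hsat x (hS' x (by simp)) l₁ l₂ rfl (fun y hy => ?_) (fun y hy => ?_)
    · exact hpw.2.2 y (hl₁.subset (List.mem_of_getLast? hy)) x (by simp)
    · exact List.rel_of_pairwise_cons hpw.2.1 (hl₂.subset (List.mem_of_mem_head? hy))

theorem isMaxChainIn_pair_iff {D S : α → Prop} {a b : α} (hSD : ∀ x, S x → D x)
    (hDS : ∀ x, D x → r a x → r x b → S x)
    (hSa : ∀ x, S x → ¬ r x a) (hSb : ∀ x, S x → ¬ r b x) :
    IsMaxChainIn r S [a, b] ↔ S a ∧ S b ∧ CovByIn r D a b := by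
  rw [isMaxChainIn_iff]
  constructor
  · rintro ⟨⟨hS, hchain⟩, hsat⟩
    refine ⟨hS a (by simp), hS b (by simp), List.isChain_pair.mp hchain,
      fun x hx hax hxb => hsat x (hDS x hx hax hxb) [a] [b] rfl (by simpa using hax)
        (by simpa using hxb)⟩
  · rintro ⟨hSa', hSb', hab, hcov⟩
    refine ⟨⟨by simp [hSa', hSb'], List.isChain_pair.mpr hab⟩, fun x hx l₁ l₂ hsplit h₁ h₂ => ?_⟩
    rcases l₁ with _ | ⟨y, _ | ⟨z, _ | ⟨w, l₁⟩⟩⟩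
    · subst hsplit
      exact hSa x hx (h₂ a rfl)
    · obtain ⟨rfl, rfl⟩ : y = a ∧ l₂ = [b] := by simpa using hsplit.symm
      exact hcov x (hSD x hx) (h₁ _ rfl) (h₂ _ rfl)
    · obtain ⟨rfl, rfl, rfl⟩ : y = a ∧ z = b ∧ l₂ = [] := by simpa using hsplit.symm
      exact hSb x hx (h₁ _ rfl)
    · simp at hsplit

variable {l : List α} {a b x : α}

theorem List.IsChain.eq_or_rel_of_head?_eq (h : l.IsChain r) (ha : l.head? = some a)
    (hx : x ∈ l) : a = x ∨ r a x := by
  obtain ⟨t, rfl⟩ := List.head?_eq_some_iff.mp ha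
  rcases List.mem_cons.mp hx with rfl | hx
  exacts [Or.inl rfl, Or.inr (List.rel_of_pairwise_cons (List.isChain_iff_pairwise.mp h) hx)]

theorem List.IsChain.eq_or_rel_of_getLast?_eq (h : l.IsChain r) (hb : l.getLast? = some b)
    (hx : x ∈ l) : x = b ∨ r x b := by
  obtain ⟨t, rfl⟩ := List.getLast?_eq_some_iff.mp hb
  rcases List.mem_append.mp hx with hx | hx
  · exact Or.inr ((List.pairwise_append.mp (List.isChain_iff_pairwise.mp h)).2.2 x hx b
      (List.mem_singleton_self b))
  · exact Or.inl (List.mem_singleton.mp hx)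

theorem rel_of_eq_or_rel_of_rel {c : α} (hab : a = b ∨ r a b) (hbc : r b c) : r a c :=
  hab.elim (fun h => h ▸ hbc) (fun h => _root_.trans h hbc)

theorem rel_of_rel_of_eq_or_rel {c : α} (hab : r a b) (hbc : b = c ∨ r b c) : r a c :=
  hbc.elim (fun h => h ▸ hab) (fun h => _root_.trans hab h)

theorem isMaxChainIn_iff_isChain_covByIn [Std.Irrefl r] {D S : α → Prop} (ha : D a) (hb : D b)
    (hab : a = b ∨ r a b) (hS : ∀ x, S x ↔ D x ∧ (a = x ∨ r a x) ∧ (x = b ∨ r x b)) :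
    IsMaxChainIn r S l ↔
      l.head? = some a ∧ l.getLast? = some b ∧ l.IsChain (CovByIn r D) ∧ ∀ x ∈ l, D x := by
  rw [isMaxChainIn_iff]
  constructor
  · rintro ⟨⟨hSl, hchain⟩, hsat⟩
    have hSa : S a := (hS a).2 ⟨ha, Or.inl rfl, hab⟩
    have hSb : S b := (hS b).2 ⟨hb, hab, Or.inl rfl⟩
    have hne : l ≠ [] := by
      rintro rfl
      exact hsat a hSa [] [] rfl (by simp) (by simp)
    have hhead : l.head? = some a := by
      obtain ⟨x, t, rfl⟩ := List.exists_cons_of_ne_nil hne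
      rcases ((hS x).1 (hSl x (by simp))).2.1 with rfl | hax
      · rfl
      · exact (hsat a hSa [] _ rfl (by simp) (by simpa using hax)).elim
    have hlast : l.getLast? = some b := by
      obtain ⟨init, z, rfl⟩ := (List.eq_nil_or_concat' l).resolve_left hne
      rcases ((hS z).1 (hSl z (by simp))).2.2 with rfl | hzb
      · simp
      · exact (hsat b hSb (init ++ [z]) [] (by simp) (by simpa using hzb) (by simp)).elim
    refine ⟨hhead, hlast, List.isChain_iff_forall_rel_of_append_cons_cons.mpr ?_,
      fun y hy => ((hS y).1 (hSl y hy)).1⟩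
    rintro q q' l₁ l₂ rfl
    refine ⟨List.isChain_iff_forall_rel_of_append_cons_cons.mp hchain rfl,
      fun x hx hqx hxq' => hsat x ?_ (l₁ ++ [q]) (q' :: l₂) (by simp) (by simpa using hqx)
        (by simpa using hxq')⟩
    obtain ⟨-, haq, -⟩ := (hS q).1 (hSl q (by simp))
    obtain ⟨-, -, hq'b⟩ := (hS q').1 (hSl q' (by simp))
    exact (hS x).2 ⟨hx, Or.inr (rel_of_eq_or_rel_of_rel haq hqx),
      Or.inr (rel_of_rel_of_eq_or_rel hxq' hq'b)⟩
  · rintro ⟨hhead, hlast, hcov, hD⟩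
    have hchain : l.IsChain r := hcov.imp fun _ _ h => h.1
    refine ⟨⟨fun y hy => (hS y).2 ⟨hD y hy, hchain.eq_or_rel_of_head?_eq hhead hy,
      hchain.eq_or_rel_of_getLast?_eq hlast hy⟩, hchain⟩, ?_⟩
    rintro x hSx l₁ l₂ rfl h₁ h₂
    obtain ⟨hDx, hax, hxb⟩ := (hS x).1 hSx
    rcases hq : l₁.getLast? with _ | q
    · rw [List.getLast?_eq_none_iff] at hq
      subst hq
      exact irrefl x (rel_of_rel_of_eq_or_rel (h₂ a hhead) hax)
    rcases hq' : l₂.head? with _ | q'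
    · rw [List.head?_eq_none_iff] at hq'
      subst hq'
      exact irrefl x (rel_of_eq_or_rel_of_rel hxb (h₁ b (by simpa using hlast)))
    exact ((List.isChain_append.mp hcov).2.2 q hq q' hq').2 x hDx (h₁ q hq) (h₂ q' hq')

end MaximalChains

theorem Nat.eq_and_eq_of_add_mul_eq_add_mul {N k k' s s' : ℕ} (hs : s < N) (hs' : s' < N)
    (h : s + N * k = s' + N * k') : s = s' ∧ k = k' := by
  have hN : 0 < N := by omega
  obtain ⟨hk, hs⟩ := (Nat.div_mod_unique hN).2 ⟨h, hs⟩
  obtain ⟨hk', hs'⟩ := (Nat.div_mod_unique hN).2 ⟨rfl, hs'⟩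
  exact ⟨hs.symm.trans hs', hk.symm.trans hk'⟩

theorem tpos_r_eq {n i j : ℕ} (hj : 1 ≤ j) :
    tpos n (.r i j) = (j - 1) + (2 * n - 1) * (i - 1) + 1 := by
  rw [tpos, Nat.mul_comm]
  omega

theorem tpos_rt_eq {n i j : ℕ} (hi : 2 ≤ i) (hj : 1 ≤ j) (hjn : j ≤ n) :
    tpos n (.rt i j) = (2 * n - j) + (2 * n - 1) * (i - 2) + 1 := by
  obtain ⟨k, rfl⟩ : ∃ k, i = k + 2 := ⟨i - 2, by omega⟩
  rw [tpos, show k + 2 - 1 = k + 1 by omega, Nat.add_sub_cancel, Nat.succ_mul, Nat.mul_comm]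
  omega

-- Offsets of `r`-tokens are `j - 1 < n`, those of `r̃`-tokens are `2n - j ≥ n`.
theorem tpos_injOn (m n : ℕ) : Set.InjOn (tpos n) {t | TokDom m n t} := by
  intro t ht t' ht' h
  cases t <;> cases t' <;> obtain ⟨hi, -, hj, hjn⟩ := ht <;> obtain ⟨hi', -, hj', hjn'⟩ := ht' <;>
    (first | rw [tpos_r_eq hj] at h | rw [tpos_rt_eq hi (by omega) hjn] at h) <;>
    (first | rw [tpos_r_eq hj'] at h | rw [tpos_rt_eq hi' (by omega) hjn'] at h) <;>
    have := Nat.eq_and_eq_of_add_mul_eq_add_mul (by omega) (by omega) (Nat.add_right_cancel h) <;>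
    first | omega | congr 1 <;> omega

def Tok.swap : Tok → Tok
  | .r i j => .r j i
  | .rt i j => .rt j i

theorem Tok.swap_injective : Function.Injective Tok.swap := by
  rintro (⟨i, j⟩ | ⟨i, j⟩) (⟨i', j'⟩ | ⟨i', j'⟩) h <;> simp_all [Tok.swap]

theorem tokDom_swap {m n : ℕ} {t : Tok} : TokDom n m t.swap ↔ TokDom m n t := by
  cases t <;> simp only [Tok.swap, TokDom] <;> tauto

theorem tval_eq_tpos_swap (m : ℕ) (t : Tok) : tval m t = tpos m t.swap := by
  cases t <;> rfl

theorem tval_injOn (m n : ℕ) : Set.InjOn (tval m) {t | TokDom m n t} :=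
  fun t ht t' ht' h => Tok.swap_injective <|
    tpos_injOn n m (tokDom_swap.2 ht) (tokDom_swap.2 ht')
      (by simpa only [tval_eq_tpos_swap] using h)

def TokLt (m n : ℕ) (t t' : Tok) : Prop :=
  tpos n t < tpos n t' ∧ tval m t < tval m t'

instance (m n : ℕ) : IsStrictOrder Tok (TokLt m n) where
  irrefl _ h := lt_irrefl _ h.1
  trans _ _ _ h h' := ⟨h.1.trans h'.1, h.2.trans h'.2⟩

section TokOrder

variable {m n : ℕ}

theorem eq_or_tokLt_iff {t t' : Tok} (ht : TokDom m n t) (ht' : TokDom m n t') :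
    t = t' ∨ TokLt m n t t' ↔ tpos n t ≤ tpos n t' ∧ tval m t ≤ tval m t' := by
  refine ⟨by rintro (rfl | h); exacts [⟨le_rfl, le_rfl⟩, ⟨h.1.le, h.2.le⟩], fun ⟨hp, hv⟩ => ?_⟩
  by_cases h : t = t'
  · exact Or.inl h
  · exact Or.inr ⟨hp.lt_of_ne fun e => h (tpos_injOn m n ht ht' e),
      hv.lt_of_ne fun e => h (tval_injOn m n ht ht' e)⟩

theorem mem_window_iff {a b x : Tok} (ha : TokDom m n a) (hb : TokDom m n b) :
    ((TokDom m n x ∧ tpos n a ≤ tpos n x ∧ tpos n x ≤ tpos n b) ∧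
        tval m a ≤ tval m x ∧ tval m x ≤ tval m b) ↔
      TokDom m n x ∧ (a = x ∨ TokLt m n a x) ∧ (x = b ∨ TokLt m n x b) := by
  by_cases hx : TokDom m n x
  · rw [eq_or_tokLt_iff ha hx, eq_or_tokLt_iff hx hb]
    tauto
  · tauto

theorem maxBandIncSeg_iff_isMaxChainIn {pl pr vl vr : ℕ} {Q : List Tok} :
    MaxBandIncSeg m n pl pr vl vr Q ↔ IsMaxChainIn (TokLt m n)
      (fun t => (TokDom m n t ∧ pl ≤ tpos n t ∧ tpos n t ≤ pr) ∧ vl ≤ tval m t ∧ tval m t ≤ vr)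
      Q := by
  constructor
  · rintro ⟨⟨hseg, hchain⟩, hband, hmax⟩
    exact ⟨⟨fun t ht => ⟨hseg t ht, hband t ht⟩, hchain⟩,
      fun Q' ⟨hS', hchain'⟩ => hmax Q' ⟨fun t ht => (hS' t ht).1, hchain'⟩ fun t ht => (hS' t ht).2⟩
  · rintro ⟨⟨hS, hchain⟩, hmax⟩
    exact ⟨⟨fun t ht => (hS t ht).1, hchain⟩, fun t ht => (hS t ht).2,
      fun Q' hinc hband => hmax Q' ⟨fun t ht => ⟨hinc.1 t ht, hband t ht⟩, hinc.2⟩⟩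

theorem maxIncSeg_pair_iff_covByIn {q q' : Tok} (hq : TokDom m n q) (hq' : TokDom m n q') :
    MaxIncSeg m n (tpos n q) (tpos n q') [q, q'] ↔ CovByIn (TokLt m n) (TokDom m n) q q' := by
  refine (isMaxChainIn_pair_iff (r := TokLt m n) (fun _ hx => hx.1)
    (fun x hx hqx hxq' => ⟨hx, hqx.1.le, hxq'.1.le⟩) (fun _ hx hxq => hx.2.1.not_gt hxq.1)
    (fun _ hx hq'x => hx.2.2.not_gt hq'x.1)).trans ?_
  exact ⟨fun h => h.2.2, fun h => ⟨⟨hq, le_rfl, h.1.1.le⟩, ⟨hq', h.1.1.le, le_rfl⟩, h⟩⟩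

end TokOrder

def TokStep (q q' : Tok) : Prop :=
  (⌈iq q⌉ : ℚ) ≤ iq q' ∧ (⌈jq q⌉ : ℚ) ≤ jq q' ∧ (iq q' - iq q) + (jq q' - jq q) = 1

theorem Int.ceil_natCast_sub_half (i : ℕ) : ⌈(i : ℚ) - 1 / 2⌉ = i := by
  rw [Int.ceil_eq_iff]
  constructor <;> push_cast <;> linarith

section Steps

variable {i j i' j' : ℕ}

theorem tokStep_r_r_iff :
    TokStep (.r i j) (.r i' j') ↔ (i' = i + 1 ∧ j' = j) ∨ (i' = i ∧ j' = j + 1) := by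
  simp only [TokStep, iq, jq, Int.ceil_natCast, Int.cast_natCast, Nat.cast_le]
  constructor
  · rintro ⟨hi, hj, hsum⟩
    have : i' + j' = i + j + 1 := by exact_mod_cast (by linarith : (i' + j' : ℚ) = i + j + 1)
    omega
  · rintro (⟨rfl, rfl⟩ | ⟨rfl, rfl⟩) <;> push_cast <;> norm_num

theorem tokStep_r_rt_iff : TokStep (.r i j) (.rt i' j') ↔ i' = i + 1 ∧ j' = j + 1 := by
  simp only [TokStep, iq, jq, Int.ceil_natCast, Int.cast_natCast]
  constructor
  · rintro ⟨hi, hj, hsum⟩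
    have : i < i' := by exact_mod_cast (by linarith : (i : ℚ) < i')
    have : j < j' := by exact_mod_cast (by linarith : (j : ℚ) < j')
    have : i' + j' = i + j + 2 := by exact_mod_cast (by linarith : (i' + j' : ℚ) = i + j + 2)
    omega
  · rintro ⟨rfl, rfl⟩
    push_cast
    refine ⟨?_, ?_, ?_⟩ <;> linarith

theorem tokStep_rt_r_iff : TokStep (.rt i j) (.r i' j') ↔ i' = i ∧ j' = j := by
  simp only [TokStep, iq, jq, Int.ceil_natCast_sub_half, Int.cast_natCast, Nat.cast_le]
  constructor
  · rintro ⟨hi, hj, hsum⟩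
    have : i' + j' = i + j := by exact_mod_cast (by linarith : (i' + j' : ℚ) = i + j)
    omega
  · rintro ⟨rfl, rfl⟩
    exact ⟨le_rfl, le_rfl, by ring⟩

theorem not_tokStep_rt_rt : ¬ TokStep (.rt i j) (.rt i' j') := by
  simp only [TokStep, iq, jq, Int.ceil_natCast_sub_half, Int.cast_natCast]
  rintro ⟨hi, hj, hsum⟩
  have : i < i' := by exact_mod_cast (by linarith : (i : ℚ) < i')
  have : j < j' := by exact_mod_cast (by linarith : (j : ℚ) < j')
  have : i' + j' = i + j + 1 := by exact_mod_cast (by linarith : (i' + j' : ℚ) = i + j + 1)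
  omega

end Steps

theorem TokStep.iq_le_and_jq_le {q q' : Tok} (h : TokStep q q') : iq q ≤ iq q' ∧ jq q ≤ jq q' :=
  ⟨(Int.le_ceil _).trans h.1, (Int.le_ceil _).trans h.2.1⟩

theorem tokDom_of_iq_jq_bounds {m n il ir jl jr : ℕ} {t : Tok}
    (hil : 1 ≤ il) (him : ir ≤ m) (hjl : 1 ≤ jl) (hjn : jr ≤ n)
    (hi : (il : ℚ) ≤ iq t ∧ iq t ≤ ir) (hj : (jl : ℚ) ≤ jq t ∧ jq t ≤ jr) : TokDom m n t := by
  cases t with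
  | r i j =>
    simp only [iq, jq, Nat.cast_le] at hi hj
    exact ⟨by omega, by omega, by omega, by omega⟩
  | rt i j =>
    simp only [iq, jq] at hi hj
    have : il < i := by exact_mod_cast (by linarith : (il : ℚ) < i)
    have : i < ir + 1 := by exact_mod_cast (by linarith : (i : ℚ) < ir + 1)
    have : jl < j := by exact_mod_cast (by linarith : (jl : ℚ) < j)
    have : j < jr + 1 := by exact_mod_cast (by linarith : (j : ℚ) < jr + 1)
    exact ⟨by omega, by omega, by omega, by omega⟩

theorem tokDom_of_mem_of_isChain {m n il ir jl jr : ℕ} {Q : List Tok}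
    (hil : 1 ≤ il) (him : ir ≤ m) (hjl : 1 ≤ jl) (hjn : jr ≤ n) (hc : Q.IsChain TokStep)
    (hh : Q.head? = some (.r il jl)) (hl : Q.getLast? = some (.r ir jr)) :
    ∀ t ∈ Q, TokDom m n t := by
  let f : Tok → ℚ × ℚ := fun t => (iq t, jq t)
  have : IsTrans Tok (fun t t' => f t ≤ f t') := ⟨fun _ _ _ => le_trans⟩
  have hmono : Q.IsChain (fun t t' => f t ≤ f t') :=
    hc.imp fun _ _ h => Prod.mk_le_mk.mpr h.iq_le_and_jq_le
  intro t ht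
  have hlow : f (.r il jl) ≤ f t :=
    (hmono.eq_or_rel_of_head?_eq hh ht).elim (fun h => h ▸ le_rfl) id
  have hhigh : f t ≤ f (.r ir jr) :=
    (hmono.eq_or_rel_of_getLast?_eq hl ht).elim (fun h => h ▸ le_rfl) id
  exact tokDom_of_iq_jq_bounds hil him hjl hjn ⟨hlow.1, hhigh.1⟩ ⟨hlow.2, hhigh.2⟩

theorem hat_cons_cons_of_eq (i j : ℕ) (P : List (ℕ × ℕ)) :
    hat ((i, j) :: (i + 1, j + 1) :: P) =
      .r i j :: .rt (i + 1) (j + 1) :: hat ((i + 1, j + 1) :: P) := by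
  simp [hat, hatAux]

theorem hat_cons_cons_of_ne {p q : ℕ × ℕ} (P : List (ℕ × ℕ)) (h : q ≠ (p.1 + 1, p.2 + 1)) :
    hat (p :: q :: P) = .r p.1 p.2 :: hat (q :: P) := by
  simp [hat, hatAux, h]

theorem hat_cons_ne_nil (p : ℕ × ℕ) (P : List (ℕ × ℕ)) : hat (p :: P) ≠ [] :=
  List.cons_ne_nil _ _

theorem head?_hat (P : List (ℕ × ℕ)) : (hat P).head? = P.head?.map fun p => .r p.1 p.2 := by
  cases P <;> rfl

theorem getLast?_hat : ∀ P : List (ℕ × ℕ), (hat P).getLast? = P.getLast?.map fun p => .r p.1 p.2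
  | [] => rfl
  | [_] => rfl
  | (i, j) :: q :: P => by
    by_cases h : q = (i + 1, j + 1)
    · subst h
      rw [hat_cons_cons_of_eq, List.getLast?_cons_cons,
        List.getLast?_cons_of_ne_nil (hat_cons_ne_nil _ _), getLast?_hat, List.getLast?_cons_cons]
    · rw [hat_cons_cons_of_ne P h, List.getLast?_cons_of_ne_nil (hat_cons_ne_nil _ _),
        getLast?_hat, List.getLast?_cons_cons]

theorem isChain_hat : ∀ {P : List (ℕ × ℕ)}, P.IsChain IsStep → (hat P).IsChain TokStep
  | [], _ => .nil
  | [_], _ => .singleton _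
  | (i, j) :: q :: P, h => by
    obtain ⟨hstep, hP⟩ := List.isChain_cons_cons.mp h
    have ih := isChain_hat hP
    by_cases hq : q = (i + 1, j + 1)
    · subst hq
      rw [hat_cons_cons_of_eq]
      exact (ih.cons_cons (tokStep_rt_r_iff.mpr ⟨rfl, rfl⟩)).cons_cons
        (tokStep_r_rt_iff.mpr ⟨rfl, rfl⟩)
    · rw [hat_cons_cons_of_ne P hq]
      refine ih.cons_cons (tokStep_r_r_iff.mpr ?_)
      rcases hstep with h | rfl | rfl
      exacts [absurd h hq, Or.inl ⟨rfl, rfl⟩, Or.inr ⟨rfl, rfl⟩]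

theorem exists_hat_eq_of_isChain :
    ∀ (L : List Tok) (i j : ℕ), (Tok.r i j :: L).IsChain TokStep →
      (∀ a b, (Tok.r i j :: L).getLast? ≠ some (.rt a b)) →
      ∃ P, ((i, j) :: P).IsChain IsStep ∧ hat ((i, j) :: P) = .r i j :: L
  | [], i, j, _, _ => ⟨[], .singleton _, rfl⟩
  | .r a b :: L, i, j, hc, hl => by
    obtain ⟨hstep, hc⟩ := List.isChain_cons_cons.mp hc
    obtain ⟨P, hP, hhat⟩ := exists_hat_eq_of_isChain L a b hc fun a' b' => by
      simpa only [List.getLast?_cons_cons] using hl a' b'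
    have hne : (a, b) ≠ (i + 1, j + 1) := by
      rcases tokStep_r_r_iff.mp hstep with ⟨rfl, rfl⟩ | ⟨rfl, rfl⟩ <;> simp
    refine ⟨(a, b) :: P, hP.cons_cons ?_, by rw [hat_cons_cons_of_ne P hne, hhat]⟩
    rcases tokStep_r_r_iff.mp hstep with ⟨rfl, rfl⟩ | ⟨rfl, rfl⟩
    exacts [Or.inr (Or.inl rfl), Or.inr (Or.inr rfl)]
  | [.rt a b], i, j, _, hl => (hl a b rfl).elim
  | .rt a b :: .rt _ _ :: _, _, _, hc, _ =>
    (not_tokStep_rt_rt (List.isChain_cons_cons.mp (List.isChain_cons_cons.mp hc).2).1).elim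
  | .rt a b :: .r a' b' :: L, i, j, hc, hl => by
    obtain ⟨hstep, hc₁⟩ := List.isChain_cons_cons.mp hc
    obtain ⟨hstep', hc₂⟩ := List.isChain_cons_cons.mp hc₁
    obtain ⟨rfl, rfl⟩ := tokStep_r_rt_iff.mp hstep
    obtain ⟨rfl, rfl⟩ := tokStep_rt_r_iff.mp hstep'
    obtain ⟨P, hP, hhat⟩ := exists_hat_eq_of_isChain L (i + 1) (j + 1) hc₂ fun a' b' => by
      simpa only [List.getLast?_cons_cons] using hl a' b'
    exact ⟨(i + 1, j + 1) :: P, hP.cons_cons (Or.inl rfl), by rw [hat_cons_cons_of_eq, hhat]⟩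

theorem exists_isAlignment_hat_eq_iff {il ir jl jr : ℕ} {Q : List Tok} :
    (∃ P, IsAlignment il ir jl jr P ∧ Q = hat P) ↔
      Q.head? = some (.r il jl) ∧ Q.getLast? = some (.r ir jr) ∧ Q.IsChain TokStep := by
  constructor
  · rintro ⟨P, ⟨hh, hl, hc⟩, rfl⟩
    exact ⟨by rw [head?_hat, hh]; rfl, by rw [getLast?_hat, hl]; rfl, isChain_hat hc⟩
  · rintro ⟨hh, hl, hc⟩
    obtain ⟨L, rfl⟩ := List.head?_eq_some_iff.mp hh
    obtain ⟨P, hP, hhat⟩ := exists_hat_eq_of_isChain L il jl hc (by simp [hl])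
    refine ⟨(il, jl) :: P, ⟨rfl, ?_, hP⟩, hhat.symm⟩
    rw [← hhat, getLast?_hat, Option.map_eq_some_iff] at hl
    obtain ⟨p, hp, hpr⟩ := hl
    rw [hp, show p = (ir, jr) by cases hpr; rfl]

theorem banded_maximal_iff_hat_of_alignment (m n : ℕ) (il ir jl jr : ℕ)
    (hil : 1 ≤ il) (hii : il ≤ ir) (him : ir ≤ m)
    (hjl : 1 ≤ jl) (hjj : jl ≤ jr) (hjn : jr ≤ n)
    (H : ∀ q q' : Tok, TokDom m n q → TokDom m n q' →
      (MaxIncSeg m n (tpos n q) (tpos n q') [q, q'] ↔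
        ((⌈iq q⌉ : ℚ) ≤ iq q' ∧ (⌈jq q⌉ : ℚ) ≤ jq q' ∧
          (iq q' - iq q) + (jq q' - jq q) = 1))) :
    ∀ Q : List Tok,
      MaxBandIncSeg m n (tpos n (.r il jl)) (tpos n (.r ir jr))
          (tval m (.r il jl)) (tval m (.r ir jr)) Q ↔
        ∃ P, IsAlignment il ir jl jr P ∧ Q = hat P := by
  intro Q
  have hdoml : TokDom m n (.r il jl) := ⟨hil, hii.trans him, hjl, hjj.trans hjn⟩
  have hdomr : TokDom m n (.r ir jr) := ⟨hil.trans hii, him, hjl.trans hjj, hjn⟩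
  have hle : Tok.r il jl = .r ir jr ∨ TokLt m n (.r il jl) (.r ir jr) :=
    (eq_or_tokLt_iff hdoml hdomr).2 ⟨by simp only [tpos]; gcongr, by simp only [tval]; gcongr⟩
  have hsteps (hD : ∀ t ∈ Q, TokDom m n t) :
      Q.IsChain (CovByIn (TokLt m n) (TokDom m n)) ↔ Q.IsChain TokStep :=
    List.IsChain.iff_of_mem_imp fun q q' hq hq' =>
      (maxIncSeg_pair_iff_covByIn (hD q hq) (hD q' hq')).symm.trans (H q q' (hD q hq) (hD q' hq'))
  rw [maxBandIncSeg_iff_isMaxChainIn,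
    isMaxChainIn_iff_isChain_covByIn hdoml hdomr hle fun _ => mem_window_iff hdoml hdomr,
    exists_isAlignment_hat_eq_iff]
  refine ⟨fun ⟨hh, hl, hc, hD⟩ => ⟨hh, hl, (hsteps hD).1 hc⟩, fun ⟨hh, hl, hc⟩ => ?_⟩
  have hD := tokDom_of_mem_of_isChain hil him hjl hjn hc hh hl
  exact ⟨hh, hl, (hsteps hD).2 hc, hD⟩
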